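/- Suppose α₁ = α₂ = 0 and λ₁ = λ₂. Then there exists a nonzero W(2,2)-module homomorphism Ω(λ₁,0,h₁) → Ω(λ₂,0,h₂) if and only if h₂ − h₁ is a constant polynomial equal to a non-negative integer n, in which case the homomorphism space is one-dimensional, spanned by u(s,t) ↦ u(s,t)·tⁿ. -/
import Mathlib


open Polynomial TensorProduct

/-- Basis index set for the W-algebra W(2,2): elements `L n`, `W n` (n ∈ ℤ) and a central `C`. -/
inductive WIdx : Type
  | L : ℤ → WIdx
  | W : ℤ → WIdx
  | C : WIdx

/-- The central-term coefficient δ_{m+n,0}·(m³−m)/12. -/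
noncomputable def deltaC (m n : ℤ) : ℂ := if m + n = 0 then ((m : ℂ)^3 - (m : ℂ))/12 else 0

/-- A representation of the W-algebra W(2,2) on a complex vector space `M`,
given by operators for each basis element satisfying the bracket relations. -/
structure WRep (M : Type*) [AddCommGroup M] [Module ℂ M] where
  ρ : WIdx → Module.End ℂ M
  rel_LL : ∀ m n : ℤ, ρ (.L m) * ρ (.L n) - ρ (.L n) * ρ (.L m)
      = ((n : ℂ) - (m : ℂ)) • ρ (.L (m + n)) + deltaC m n • ρ .C
  rel_LW : ∀ m n : ℤ, ρ (.L m) * ρ (.W n) - ρ (.W n) * ρ (.L m)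
      = ((n : ℂ) - (m : ℂ)) • ρ (.W (m + n)) + deltaC m n • ρ .C
  rel_WW : ∀ m n : ℤ, ρ (.W m) * ρ (.W n) = ρ (.W n) * ρ (.W m)
  rel_C : ∀ x, ρ .C * ρ x = ρ x * ρ .C

/-- A subspace invariant under all the operators of a representation. -/
def WInvariant {M : Type*} [AddCommGroup M] [Module ℂ M]
    (ρ : WIdx → Module.End ℂ M) (N : Submodule ℂ M) : Prop :=
  ∀ b : WIdx, ∀ x ∈ N, ρ b x ∈ N

/-- Simplicity: the module is nonzero and has no nonzero proper invariant subspaces. -/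
def WSimple {M : Type*} [AddCommGroup M] [Module ℂ M]
    (ρ : WIdx → Module.End ℂ M) : Prop :=
  (∃ x : M, x ≠ 0) ∧ ∀ N : Submodule ℂ M, WInvariant ρ N → N = ⊥ ∨ N = ⊤

/-- Module homomorphisms: linear maps intertwining the two actions. -/
def WHom {M N : Type*} [AddCommGroup M] [Module ℂ M] [AddCommGroup N] [Module ℂ N]
    (ρM : WIdx → Module.End ℂ M) (ρN : WIdx → Module.End ℂ N) (φ : M →ₗ[ℂ] N) : Prop :=
  ∀ b : WIdx, ∀ x : M, φ (ρM b x) = ρN b (φ x)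

/-- Restricted module: every vector is killed by `L n` and `W n` for all sufficiently large `n`. -/
def WRestricted {M : Type*} [AddCommGroup M] [Module ℂ M]
    (ρ : WIdx → Module.End ℂ M) : Prop :=
  ∀ x : M, ∃ N : ℤ, ∀ n : ℤ, N ≤ n → ρ (.L n) x = 0 ∧ ρ (.W n) x = 0

/-- The substitution operator f(s) ↦ f(s − n) on ℂ[s]. -/
noncomputable def shiftMap (n : ℤ) : Module.End ℂ (Polynomial ℂ) :=
  (Polynomial.aeval (Polynomial.X - Polynomial.C (n : ℂ))).toLinearMap

/-- The action of W(2,2) on Ω(λ,α) = ℂ[s]: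
`L n · f(s) = λⁿ (s − nα) f(s − n)`, `W n` and `C` act by zero. -/
noncomputable def omegaRho (lam alpha : ℂ) : WIdx → Module.End ℂ (Polynomial ℂ)
  | .L n => (lam ^ n) •
      ((LinearMap.mulLeft ℂ (Polynomial.X - Polynomial.C ((n : ℂ) * alpha))) ∘ₗ shiftMap n)
  | .W _ => 0
  | .C => 0

/-- g(t) = (h(t) − h(α))/(t − α) as an exact polynomial quotient. -/
noncomputable def gPoly (alpha : ℂ) (h : Polynomial ℂ) : Polynomial ℂ :=
  (h - Polynomial.C (h.eval alpha)) /ₘ (Polynomial.X - Polynomial.C alpha)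

/-- F(f) = g·f − f′. -/
noncomputable def Fmap (alpha : ℂ) (h : Polynomial ℂ) : Module.End ℂ (Polynomial ℂ) :=
  LinearMap.mulLeft ℂ (gPoly alpha h) - (Polynomial.derivative : Polynomial ℂ →ₗ[ℂ] Polynomial ℂ)

/-- G(f) = t·F(f) + h(α)·f. -/
noncomputable def Gmap (alpha : ℂ) (h : Polynomial ℂ) : Module.End ℂ (Polynomial ℂ) :=
  (LinearMap.mulLeft ℂ (Polynomial.X : Polynomial ℂ)) ∘ₗ Fmap alpha h
    + (h.eval alpha) • (LinearMap.id : Polynomial ℂ →ₗ[ℂ] Polynomial ℂ)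

/-- The action of W(2,2) on Ω(λ,α,h) = ℂ[s,t], realized as ℂ[s] ⊗ ℂ[t]:
`L n·(s^p t^q) = λⁿ(s−n)^p (s t^q + n G(t^q) − n²α F(t^q))`,
`W n·(s^p t^q) = λⁿ(t−nα)(s−n)^p t^q`, `C` acts by zero. -/
noncomputable def omegaHRho (lam alpha : ℂ) (h : Polynomial ℂ) :
    WIdx → Module.End ℂ (TensorProduct ℂ (Polynomial ℂ) (Polynomial ℂ))
  | .L n => (lam ^ n) •
      (TensorProduct.map ((LinearMap.mulLeft ℂ (Polynomial.X : Polynomial ℂ)) ∘ₗ shiftMap n) LinearMap.id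
        + (n : ℂ) • TensorProduct.map (shiftMap n) (Gmap alpha h)
        - ((n : ℂ)^2 * alpha) • TensorProduct.map (shiftMap n) (Fmap alpha h))
  | .W n => (lam ^ n) •
      TensorProduct.map (shiftMap n)
        (LinearMap.mulLeft ℂ (Polynomial.X - Polynomial.C ((n : ℂ) * alpha)))
  | .C => 0

namespace WAux

open Polynomial TensorProduct

noncomputable def Sa (n : ℤ) : Polynomial ℂ →ₐ[ℂ] Polynomial ℂ :=
  aeval (X - Polynomial.C (n : ℂ))

noncomputable def Sn (n : ℤ) :
    TensorProduct ℂ (Polynomial ℂ) (Polynomial ℂ) →ₐ[ℂ]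
      TensorProduct ℂ (Polynomial ℂ) (Polynomial ℂ) :=
  Algebra.TensorProduct.map (Sa n) (AlgHom.id ℂ _)

lemma shiftMap_apply (n : ℤ) (p : Polynomial ℂ) : shiftMap n p = Sa n p := rfl

lemma shiftMap_one (n : ℤ) : shiftMap n (1 : Polynomial ℂ) = 1 := map_one (Sa n)

lemma shiftMap_zero : shiftMap (0 : ℤ) = LinearMap.id := by
  simp only [shiftMap, Int.cast_zero, Polynomial.C_0, sub_zero, aeval_X_left]
  rfl

lemma Sn_tmul (n : ℤ) (a b : Polynomial ℂ) :
    Sn n (a ⊗ₜ[ℂ] b) = (Sa n a) ⊗ₜ[ℂ] b := rfl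

lemma map_mulLeft_left (p : Polynomial ℂ) :
    TensorProduct.map (LinearMap.mulLeft ℂ p) (LinearMap.id)
      = LinearMap.mulLeft ℂ ((p ⊗ₜ[ℂ] (1 : Polynomial ℂ)) :
          TensorProduct ℂ (Polynomial ℂ) (Polynomial ℂ)) := by
  apply TensorProduct.ext'
  intro a b
  simp [Algebra.TensorProduct.tmul_mul_tmul]

lemma map_mulLeft_right (q : Polynomial ℂ) :
    TensorProduct.map (LinearMap.id) (LinearMap.mulLeft ℂ q)
      = LinearMap.mulLeft ℂ (((1 : Polynomial ℂ) ⊗ₜ[ℂ] q) :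
          TensorProduct ℂ (Polynomial ℂ) (Polynomial ℂ)) := by
  apply TensorProduct.ext'
  intro a b
  simp [Algebra.TensorProduct.tmul_mul_tmul]

lemma map_shift_mulX (n : ℤ) (x : TensorProduct ℂ (Polynomial ℂ) (Polynomial ℂ)) :
    TensorProduct.map (shiftMap n) (LinearMap.mulLeft ℂ (X : Polynomial ℂ)) x
      = (((1 : Polynomial ℂ) ⊗ₜ[ℂ] (X : Polynomial ℂ)) :
          TensorProduct ℂ (Polynomial ℂ) (Polynomial ℂ)) * Sn n x := by
  have h : TensorProduct.map (shiftMap n) (LinearMap.mulLeft ℂ (X : Polynomial ℂ))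
      = LinearMap.mulLeft ℂ (((1 : Polynomial ℂ) ⊗ₜ[ℂ] (X : Polynomial ℂ)) :
          TensorProduct ℂ (Polynomial ℂ) (Polynomial ℂ)) ∘ₗ (Sn n).toLinearMap := by
    apply TensorProduct.ext'
    intro a b
    simp [Sn_tmul, shiftMap_apply, Algebra.TensorProduct.tmul_mul_tmul]
  rw [h]
  rfl

lemma map_mulX_shift (n : ℤ) (x : TensorProduct ℂ (Polynomial ℂ) (Polynomial ℂ)) :
    TensorProduct.map ((LinearMap.mulLeft ℂ (X : Polynomial ℂ)) ∘ₗ shiftMap n) LinearMap.id x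
      = (((X : Polynomial ℂ) ⊗ₜ[ℂ] (1 : Polynomial ℂ)) :
          TensorProduct ℂ (Polynomial ℂ) (Polynomial ℂ)) * Sn n x := by
  have h : TensorProduct.map ((LinearMap.mulLeft ℂ (X : Polynomial ℂ)) ∘ₗ shiftMap n) LinearMap.id
      = LinearMap.mulLeft ℂ (((X : Polynomial ℂ) ⊗ₜ[ℂ] (1 : Polynomial ℂ)) :
          TensorProduct ℂ (Polynomial ℂ) (Polynomial ℂ)) ∘ₗ (Sn n).toLinearMap := by
    apply TensorProduct.ext'
    intro a b
    simp [Sn_tmul, shiftMap_apply, Algebra.TensorProduct.tmul_mul_tmul]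
  rw [h]
  rfl

lemma one_tmul_inj {a b : Polynomial ℂ}
    (hab : ((1 : Polynomial ℂ) ⊗ₜ[ℂ] a : TensorProduct ℂ (Polynomial ℂ) (Polynomial ℂ))
      = (1 : Polynomial ℂ) ⊗ₜ[ℂ] b) : a = b := by
  have h := congrArg (Algebra.TensorProduct.lmul' (S := Polynomial ℂ) ℂ) hab
  simpa [Algebra.TensorProduct.lmul'_apply_tmul] using h

noncomputable def eMT : Polynomial (Polynomial ℂ) ≃ₐ[ℂ]
    TensorProduct ℂ (Polynomial ℂ) (Polynomial ℂ) :=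
  polyEquivTensor ℂ (Polynomial ℂ)

instance : IsDomain (TensorProduct ℂ (Polynomial ℂ) (Polynomial ℂ)) :=
  Function.Injective.isDomain (eMT.symm : TensorProduct ℂ (Polynomial ℂ) (Polynomial ℂ)
    ≃ₐ[ℂ] Polynomial (Polynomial ℂ)).toRingEquiv.toRingHom
    eMT.symm.toRingEquiv.injective

lemma Sn_eMT (n : ℤ) (v : Polynomial (Polynomial ℂ)) :
    Sn n (eMT v) = eMT (v.map ((Sa n : Polynomial ℂ →ₐ[ℂ] Polynomial ℂ) :
      Polynomial ℂ →+* Polynomial ℂ)) := by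
  have h : (Sn n).comp eMT.toAlgHom
      = eMT.toAlgHom.comp (Polynomial.mapAlgHom (Sa n)) := by
    apply Polynomial.algHom_ext'
    · apply Polynomial.algHom_ext
      simp [eMT, Sn_tmul, Polynomial.coe_mapAlgHom]
    · simp [eMT, Sn_tmul, Polynomial.coe_mapAlgHom]
  have h2 := AlgHom.congr_fun h v
  simpa [Polynomial.coe_mapAlgHom] using h2

lemma eMT_mapC (w : Polynomial ℂ) :
    eMT (w.map (Polynomial.C : ℂ →+* Polynomial ℂ)) = (1 : Polynomial ℂ) ⊗ₜ[ℂ] w := by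
  induction w using Polynomial.induction_on with
  | C c =>
    have h1 : (Polynomial.C c : Polynomial ℂ) = c • (1 : Polynomial ℂ) := by
      rw [← Polynomial.algebraMap_eq, Algebra.algebraMap_eq_smul_one]
    rw [Polynomial.map_C]
    have h2 : eMT (Polynomial.C (Polynomial.C c)) = (Polynomial.C c) ⊗ₜ[ℂ] (1 : Polynomial ℂ) := by
      simp [eMT]
    rw [h2, h1, TensorProduct.smul_tmul]
  | add p q hp hq =>
    rw [Polynomial.map_add, map_add, hp, hq, TensorProduct.tmul_add]
  | monomial k c ih =>
    have h1 : (Polynomial.C c * X ^ (k + 1) : Polynomial ℂ) = (Polynomial.C c * X ^ k) * X := by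
      ring
    rw [h1, Polynomial.map_mul, Polynomial.map_X, map_mul, ih]
    have h2 : eMT (X : Polynomial (Polynomial ℂ)) = (1 : Polynomial ℂ) ⊗ₜ[ℂ] (X : Polynomial ℂ) := by
      simp [eMT]
    rw [h2, Algebra.TensorProduct.tmul_mul_tmul, one_mul]

lemma const_of_shift (c : Polynomial ℂ)
    (hc : aeval ((X : Polynomial ℂ) - Polynomial.C (1 : ℂ)) c = c) :
    ∃ γ : ℂ, c = Polynomial.C γ := by
  have heval : ∀ z : ℂ, c.eval (z - 1) = c.eval z := by
    intro z
    conv_rhs => rw [← hc]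
    rw [← comp_eq_aeval, eval_comp]
    simp
  have hnat : ∀ k : ℕ, c.eval (k : ℂ) = c.eval 0 := by
    intro k
    induction k with
    | zero => simp
    | succ k ih =>
      have h := heval ((k : ℂ) + 1)
      rw [add_sub_cancel_right] at h
      push_cast
      rw [← h, ih]
  have hz : c - Polynomial.C (c.eval 0) = 0 := by
    apply Polynomial.eq_zero_of_infinite_isRoot
    apply Set.infinite_of_injective_forall_mem
      (f := fun k : ℕ => (k : ℂ)) (hi := Nat.cast_injective)
    intro k
    simp [Polynomial.IsRoot, hnat k]
  exact ⟨c.eval 0, sub_eq_zero.mp hz⟩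

lemma X_mul_gPoly (h : Polynomial ℂ) :
    (X : Polynomial ℂ) * gPoly 0 h = h - Polynomial.C (h.eval 0) := by
  have h1 := (Polynomial.mul_divByMonic_eq_iff_isRoot
    (p := h - Polynomial.C (h.eval 0)) (a := (0 : ℂ))).mpr (by simp [Polynomial.IsRoot])
  simpa [gPoly] using h1

lemma Gmap_zero_apply (h f : Polynomial ℂ) :
    Gmap 0 h f = h * f - X * derivative f := by
  simp only [Gmap, Fmap, LinearMap.add_apply, LinearMap.comp_apply, LinearMap.sub_apply,
    LinearMap.mulLeft_apply, LinearMap.smul_apply, LinearMap.id_apply, Polynomial.smul_eq_C_mul]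
  rw [mul_sub, ← mul_assoc, X_mul_gPoly]
  ring

lemma G_intertwine (h1 h2 : Polynomial ℂ) (n : ℕ)
    (hd : h2 - h1 = Polynomial.C (n : ℂ)) (f : Polynomial ℂ) :
    (X : Polynomial ℂ) ^ n * Gmap 0 h1 f = Gmap 0 h2 ((X : Polynomial ℂ) ^ n * f) := by
  have h2e : h2 = h1 + Polynomial.C (n : ℂ) := by
    rw [← hd]; ring
  have hx : (X : Polynomial ℂ) * (Polynomial.C (n : ℂ) * X ^ (n - 1))
      = Polynomial.C (n : ℂ) * X ^ n := by
    cases n with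
    | zero => simp
    | succ k => simp only [Nat.add_sub_cancel]; ring
  rw [Gmap_zero_apply, Gmap_zero_apply, derivative_mul, derivative_X_pow, h2e]
  linear_combination f * hx

lemma coeff_X_mul_derivative (w : Polynomial ℂ) (j : ℕ) :
    ((X : Polynomial ℂ) * derivative w).coeff j = (j : ℂ) * w.coeff j := by
  cases j with
  | zero => simp [Polynomial.mul_coeff_zero]
  | succ k =>
    rw [Polynomial.coeff_X_mul, Polynomial.coeff_derivative]
    push_cast
    ring

end WAux

namespace WAux2
open Polynomial TensorProduct WAux

lemma psi_hom (lam : ℂ) (h1 h2 : Polynomial ℂ) (n : ℕ)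
    (hd : h2 - h1 = Polynomial.C (n : ℂ)) :
    WHom (omegaHRho lam 0 h1) (omegaHRho lam 0 h2)
      (TensorProduct.map LinearMap.id (LinearMap.mulLeft ℂ ((X : Polynomial ℂ) ^ n))) := by
  intro b x
  induction x using TensorProduct.induction_on with
  | zero => simp
  | add y z hy hz => simp only [map_add, hy, hz]
  | tmul a q =>
    cases b with
    | C => simp [omegaHRho]
    | W m =>
      simp only [omegaHRho, mul_zero, Polynomial.C_0, sub_zero, LinearMap.smul_apply,
        map_smul, TensorProduct.map_tmul, LinearMap.mulLeft_apply, LinearMap.id_coe, id_eq]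
      rw [mul_left_comm]
    | L m =>
      have hG := G_intertwine h1 h2 n hd q
      simp only [omegaHRho, mul_zero, zero_smul, LinearMap.smul_apply, LinearMap.sub_apply,
        LinearMap.zero_apply, sub_zero, LinearMap.add_apply, map_smul, map_add,
        TensorProduct.map_tmul, LinearMap.comp_apply, LinearMap.mulLeft_apply,
        LinearMap.id_coe, id_eq, TensorProduct.tmul_smul, hG]

lemma psi_ne (n : ℕ) :
    TensorProduct.map LinearMap.id (LinearMap.mulLeft ℂ ((X : Polynomial ℂ) ^ n)) ≠
      (0 : TensorProduct ℂ (Polynomial ℂ) (Polynomial ℂ) →ₗ[ℂ]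
        TensorProduct ℂ (Polynomial ℂ) (Polynomial ℂ)) := by
  intro h
  have h1 := congrArg (fun f : TensorProduct ℂ (Polynomial ℂ) (Polynomial ℂ) →ₗ[ℂ]
      TensorProduct ℂ (Polynomial ℂ) (Polynomial ℂ) =>
    f ((1 : Polynomial ℂ) ⊗ₜ[ℂ] (1 : Polynomial ℂ))) h
  simp only [TensorProduct.map_tmul, LinearMap.mulLeft_apply, LinearMap.id_coe, id_eq,
    mul_one, LinearMap.zero_apply] at h1
  have h2 : ((1 : Polynomial ℂ) ⊗ₜ[ℂ] ((X : Polynomial ℂ) ^ n) :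
      TensorProduct ℂ (Polynomial ℂ) (Polynomial ℂ)) = 1 ⊗ₜ[ℂ] (0 : Polynomial ℂ) := by
    rw [h1, TensorProduct.tmul_zero]
  exact pow_ne_zero n Polynomial.X_ne_zero (one_tmul_inj h2)

lemma hom_structure (lam : ℂ) (hlam : lam ≠ 0) (h1 h2 : Polynomial ℂ)
    (φ : TensorProduct ℂ (Polynomial ℂ) (Polynomial ℂ) →ₗ[ℂ]
      TensorProduct ℂ (Polynomial ℂ) (Polynomial ℂ))
    (hφ : WHom (omegaHRho lam 0 h1) (omegaHRho lam 0 h2) φ) :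
    ∃ w : Polynomial ℂ,
      (∀ x, φ x = (((1 : Polynomial ℂ) ⊗ₜ[ℂ] w) :
        TensorProduct ℂ (Polynomial ℂ) (Polynomial ℂ)) * x) ∧
      (X : Polynomial ℂ) * derivative w = (h2 - h1) * w := by
  have hs : ∀ x, φ ((((X : Polynomial ℂ) ⊗ₜ[ℂ] (1 : Polynomial ℂ)) :
      TensorProduct ℂ (Polynomial ℂ) (Polynomial ℂ)) * x)
      = ((X : Polynomial ℂ) ⊗ₜ[ℂ] (1 : Polynomial ℂ)) * φ x := by
    intro x
    have h := hφ (.L 0) x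
    simp only [omegaHRho, zpow_zero, one_smul, Int.cast_zero, zero_smul, add_zero,
      mul_zero, zero_mul, shiftMap_zero, LinearMap.comp_id, LinearMap.sub_apply,
      LinearMap.zero_apply, sub_zero, LinearMap.add_apply,
      map_mulLeft_left, LinearMap.mulLeft_apply, zero_pow, ne_eq, OfNat.ofNat_ne_zero,
      not_false_eq_true] at h
    exact h
  have ht : ∀ x, φ ((((1 : Polynomial ℂ) ⊗ₜ[ℂ] (X : Polynomial ℂ)) :
      TensorProduct ℂ (Polynomial ℂ) (Polynomial ℂ)) * x)
      = ((1 : Polynomial ℂ) ⊗ₜ[ℂ] (X : Polynomial ℂ)) * φ x := by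
    intro x
    have h := hφ (.W 0) x
    simp only [omegaHRho, zpow_zero, one_smul, Int.cast_zero, zero_mul, Polynomial.C_0,
      sub_zero, shiftMap_zero, map_mulLeft_right, LinearMap.mulLeft_apply] at h
    exact h
  have hmul : ∀ x y, φ (x * y) = x * φ y := by
    have Ha : ∀ (a : Polynomial ℂ) (y : TensorProduct ℂ (Polynomial ℂ) (Polynomial ℂ)),
        φ ((a ⊗ₜ[ℂ] (1 : Polynomial ℂ)) * y) = (a ⊗ₜ[ℂ] (1 : Polynomial ℂ)) * φ y := by
      intro a
      induction a using Polynomial.induction_on with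
      | C c =>
        intro y
        have h1 : ((Polynomial.C c ⊗ₜ[ℂ] (1 : Polynomial ℂ)) :
            TensorProduct ℂ (Polynomial ℂ) (Polynomial ℂ)) = c • 1 := by
          rw [← Polynomial.algebraMap_eq, Algebra.algebraMap_eq_smul_one,
            Algebra.TensorProduct.one_def, TensorProduct.smul_tmul']
        simp [h1, smul_mul_assoc]
      | add p q hp hq =>
        intro y
        rw [TensorProduct.add_tmul, add_mul, map_add, hp, hq, add_mul]
      | monomial k c ih =>
        intro y
        have key : ((Polynomial.C c * X ^ (k + 1)) ⊗ₜ[ℂ] (1 : Polynomial ℂ) :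
            TensorProduct ℂ (Polynomial ℂ) (Polynomial ℂ))
            = ((X : Polynomial ℂ) ⊗ₜ[ℂ] (1 : Polynomial ℂ))
              * ((Polynomial.C c * X ^ k) ⊗ₜ[ℂ] (1 : Polynomial ℂ)) := by
          rw [Algebra.TensorProduct.tmul_mul_tmul, one_mul]
          congr 1
          ring
        rw [key, mul_assoc, hs, ih, ← mul_assoc, ← key]
    have Hb : ∀ (b : Polynomial ℂ) (y : TensorProduct ℂ (Polynomial ℂ) (Polynomial ℂ)),
        φ (((1 : Polynomial ℂ) ⊗ₜ[ℂ] b) * y) = ((1 : Polynomial ℂ) ⊗ₜ[ℂ] b) * φ y := by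
      intro b
      induction b using Polynomial.induction_on with
      | C c =>
        intro y
        have h1 : (((1 : Polynomial ℂ) ⊗ₜ[ℂ] Polynomial.C c) :
            TensorProduct ℂ (Polynomial ℂ) (Polynomial ℂ)) = c • 1 := by
          rw [← Polynomial.algebraMap_eq, Algebra.algebraMap_eq_smul_one,
            Algebra.TensorProduct.one_def, TensorProduct.tmul_smul]
        simp [h1, smul_mul_assoc]
      | add p q hp hq =>
        intro y
        rw [TensorProduct.tmul_add, add_mul, map_add, hp, hq, add_mul]
      | monomial k c ih =>
        intro y
        have key : (((1 : Polynomial ℂ) ⊗ₜ[ℂ] (Polynomial.C c * X ^ (k + 1))) :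
            TensorProduct ℂ (Polynomial ℂ) (Polynomial ℂ))
            = ((1 : Polynomial ℂ) ⊗ₜ[ℂ] (X : Polynomial ℂ))
              * ((1 : Polynomial ℂ) ⊗ₜ[ℂ] (Polynomial.C c * X ^ k)) := by
          rw [Algebra.TensorProduct.tmul_mul_tmul, one_mul]
          congr 1
          ring
        rw [key, mul_assoc, ht, ih, ← mul_assoc, ← key]
    intro x y
    induction x using TensorProduct.induction_on with
    | zero => simp
    | add x₁ x₂ hx₁ hx₂ => rw [add_mul, map_add, hx₁, hx₂, add_mul]
    | tmul a b =>
      have h1 : (a ⊗ₜ[ℂ] b : TensorProduct ℂ (Polynomial ℂ) (Polynomial ℂ))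
          = (a ⊗ₜ[ℂ] (1 : Polynomial ℂ)) * ((1 : Polynomial ℂ) ⊗ₜ[ℂ] b) := by
        rw [Algebra.TensorProduct.tmul_mul_tmul, mul_one, one_mul]
      rw [h1, mul_assoc, Ha, Hb, ← mul_assoc]
  set u := φ 1 with hu
  have hφu : ∀ x, φ x = u * x := by
    intro x
    have h := hmul x 1
    rw [mul_one] at h
    rw [h, mul_comm]
  have h1X : (((1 : Polynomial ℂ) ⊗ₜ[ℂ] (X : Polynomial ℂ)) :
      TensorProduct ℂ (Polynomial ℂ) (Polynomial ℂ)) ≠ 0 := by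
    intro h0
    apply Polynomial.X_ne_zero (R := ℂ)
    apply one_tmul_inj (b := (0 : Polynomial ℂ))
    rw [h0, TensorProduct.tmul_zero]
  have hSu : Sn 1 u = u := by
    have hx0 : ((1 : Polynomial ℂ) ⊗ₜ[ℂ] (1 : Polynomial ℂ) :
        TensorProduct ℂ (Polynomial ℂ) (Polynomial ℂ)) = 1 :=
      (Algebra.TensorProduct.one_def).symm
    have h := hφ (.W 1) ((1 : Polynomial ℂ) ⊗ₜ[ℂ] (1 : Polynomial ℂ))
    simp only [omegaHRho, mul_zero, Polynomial.C_0, sub_zero, LinearMap.smul_apply,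
      map_smul] at h
    rw [map_shift_mulX, map_shift_mulX] at h
    rw [hx0] at h
    rw [map_one] at h
    rw [mul_one] at h
    rw [hφu ((1 : Polynomial ℂ) ⊗ₜ[ℂ] (X : Polynomial ℂ))] at h
    rw [← hu] at h
    have h2 := smul_right_injective
      (TensorProduct ℂ (Polynomial ℂ) (Polynomial ℂ)) (zpow_ne_zero _ hlam) h
    rw [mul_comm] at h2
    exact (mul_left_cancel₀ h1X h2).symm
  obtain ⟨w, hw⟩ : ∃ w, u = ((1 : Polynomial ℂ) ⊗ₜ[ℂ] w :
      TensorProduct ℂ (Polynomial ℂ) (Polynomial ℂ)) := by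
    have hSv : (eMT.symm u).map ((Sa 1 : Polynomial ℂ →ₐ[ℂ] Polynomial ℂ) :
        Polynomial ℂ →+* Polynomial ℂ) = eMT.symm u := by
      apply eMT.injective
      rw [← Sn_eMT, AlgEquiv.apply_symm_apply]
      exact hSu
    have hcoeff : ∀ k, ∃ γ : ℂ, (eMT.symm u).coeff k = Polynomial.C γ := by
      intro k
      apply const_of_shift
      have h := congrArg (fun p => p.coeff k) hSv
      simp only [Polynomial.coeff_map] at h
      simpa [Sa] using h
    refine ⟨(eMT.symm u).map (Polynomial.evalRingHom (0 : ℂ)), ?_⟩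
    have hvw : ((eMT.symm u).map (Polynomial.evalRingHom (0 : ℂ))).map
        (Polynomial.C : ℂ →+* Polynomial ℂ) = eMT.symm u := by
      ext k
      obtain ⟨γ, hγ⟩ := hcoeff k
      rw [Polynomial.coeff_map, Polynomial.coeff_map, hγ]
      simp
    have hfin := eMT_mapC ((eMT.symm u).map (Polynomial.evalRingHom (0 : ℂ)))
    rw [hvw] at hfin
    rw [← hfin]
    exact (eMT.apply_symm_apply u).symm
  have hL : ∀ q : Polynomial ℂ, w * Gmap 0 h1 q = Gmap 0 h2 (w * q) := by
    intro q
    have h := hφ (.L 1) ((1 : Polynomial ℂ) ⊗ₜ[ℂ] q)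
    have e1 : (omegaHRho lam 0 h1 (.L 1)) ((1 : Polynomial ℂ) ⊗ₜ[ℂ] q)
        = lam ^ (1 : ℤ) • (((X : Polynomial ℂ) ⊗ₜ[ℂ] q)
            + (1 : Polynomial ℂ) ⊗ₜ[ℂ] (Gmap 0 h1 q)) := by
      simp [omegaHRho, shiftMap_one]
    have e2 : φ ((1 : Polynomial ℂ) ⊗ₜ[ℂ] q) = (1 : Polynomial ℂ) ⊗ₜ[ℂ] (w * q) := by
      rw [hφu, hw, Algebra.TensorProduct.tmul_mul_tmul, one_mul]
    have e3 : (omegaHRho lam 0 h2 (.L 1)) ((1 : Polynomial ℂ) ⊗ₜ[ℂ] (w * q))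
        = lam ^ (1 : ℤ) • (((X : Polynomial ℂ) ⊗ₜ[ℂ] (w * q))
            + (1 : Polynomial ℂ) ⊗ₜ[ℂ] (Gmap 0 h2 (w * q))) := by
      simp [omegaHRho, shiftMap_one]
    have e4 : φ (lam ^ (1 : ℤ) • (((X : Polynomial ℂ) ⊗ₜ[ℂ] q)
            + (1 : Polynomial ℂ) ⊗ₜ[ℂ] (Gmap 0 h1 q)))
        = lam ^ (1 : ℤ) • (((X : Polynomial ℂ) ⊗ₜ[ℂ] (w * q))
            + (1 : Polynomial ℂ) ⊗ₜ[ℂ] (w * Gmap 0 h1 q)) := by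
      rw [map_smul, map_add, hφu ((X : Polynomial ℂ) ⊗ₜ[ℂ] q),
        hφu ((1 : Polynomial ℂ) ⊗ₜ[ℂ] (Gmap 0 h1 q)), hw,
        Algebra.TensorProduct.tmul_mul_tmul, Algebra.TensorProduct.tmul_mul_tmul,
        one_mul, one_mul]
    rw [e1, e4, e2, e3] at h
    have h2 := smul_right_injective
      (TensorProduct ℂ (Polynomial ℂ) (Polynomial ℂ)) (zpow_ne_zero _ hlam) h
    exact one_tmul_inj (add_left_cancel h2)
  have hode : (X : Polynomial ℂ) * derivative w = (h2 - h1) * w := by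
    have h := hL 1
    rw [mul_one, Gmap_zero_apply, Gmap_zero_apply] at h
    simp only [derivative_one, mul_zero, mul_one, sub_zero] at h
    linear_combination h
  refine ⟨w, ?_, hode⟩
  intro x
  rw [hφu, hw]

end WAux2

/-- For α₁ = α₂ = 0 and λ₁ = λ₂ = λ ∈ ℂ*: there is a nonzero W(2,2)-module homomorphism
Ω(λ,0,h₁) → Ω(λ,0,h₂) iff h₂ − h₁ is a constant equal to some n ∈ ℕ; in that case
multiplication by tⁿ is such a homomorphism and the homomorphism space is one-dimensional,
spanned by u(s,t) ↦ u(s,t)·tⁿ. -/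
theorem omegaH_hom_alpha_zero (lam : ℂ) (hlam : lam ≠ 0) (h1 h2 : Polynomial ℂ) :
    ((∃ φ : TensorProduct ℂ (Polynomial ℂ) (Polynomial ℂ) →ₗ[ℂ]
          TensorProduct ℂ (Polynomial ℂ) (Polynomial ℂ),
        WHom (omegaHRho lam 0 h1) (omegaHRho lam 0 h2) φ ∧ φ ≠ 0)
      ↔ ∃ n : ℕ, h2 - h1 = Polynomial.C (n : ℂ)) ∧
    (∀ n : ℕ, h2 - h1 = Polynomial.C (n : ℂ) →
      (WHom (omegaHRho lam 0 h1) (omegaHRho lam 0 h2)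
          (TensorProduct.map LinearMap.id (LinearMap.mulLeft ℂ ((Polynomial.X : Polynomial ℂ) ^ n)))
        ∧ TensorProduct.map LinearMap.id
            (LinearMap.mulLeft ℂ ((Polynomial.X : Polynomial ℂ) ^ n)) ≠
          (0 : TensorProduct ℂ (Polynomial ℂ) (Polynomial ℂ) →ₗ[ℂ]
            TensorProduct ℂ (Polynomial ℂ) (Polynomial ℂ))
        ∧ ∀ φ : TensorProduct ℂ (Polynomial ℂ) (Polynomial ℂ) →ₗ[ℂ]
            TensorProduct ℂ (Polynomial ℂ) (Polynomial ℂ),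
          WHom (omegaHRho lam 0 h1) (omegaHRho lam 0 h2) φ →
          ∃ c : ℂ, φ = c • TensorProduct.map LinearMap.id
            (LinearMap.mulLeft ℂ ((Polynomial.X : Polynomial ℂ) ^ n)))) := by
  constructor
  · constructor
    · rintro ⟨φ, hφ, hne⟩
      obtain ⟨w, hφw, hode⟩ := WAux2.hom_structure lam hlam h1 h2 φ hφ
      have hwne : w ≠ 0 := by
        intro h0
        apply hne
        apply LinearMap.ext
        intro x
        rw [hφw, h0, TensorProduct.tmul_zero]
        simp
      by_cases hD : (h2 - h1).natDegree = 0
      · have hC := Polynomial.eq_C_of_natDegree_eq_zero hD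
        obtain ⟨j, hj⟩ : ∃ j, w.coeff j ≠ 0 := by
          by_contra hall
          push_neg at hall
          exact hwne (Polynomial.ext fun j => by simp [hall j])
        refine ⟨j, ?_⟩
        rw [hC] at hode ⊢
        have hcoef := congrArg (fun p => Polynomial.coeff p j) hode
        simp only [WAux.coeff_X_mul_derivative, Polynomial.coeff_C_mul] at hcoef
        have hδ : ((h2 - h1).coeff 0) = (j : ℂ) := mul_right_cancel₀ hj hcoef.symm
        rw [hδ]
      · exfalso
        have hdne : h2 - h1 ≠ 0 := fun h0 => hD (by rw [h0]; simp)
        have hcoef := congrArg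
          (fun p => Polynomial.coeff p ((h2 - h1).natDegree + w.natDegree)) hode
        simp only [WAux.coeff_X_mul_derivative] at hcoef
        rw [Polynomial.coeff_mul_degree_add_degree] at hcoef
        have hwc : w.coeff ((h2 - h1).natDegree + w.natDegree) = 0 := by
          apply Polynomial.coeff_eq_zero_of_natDegree_lt
          omega
        rw [hwc, mul_zero] at hcoef
        exact (mul_ne_zero (Polynomial.leadingCoeff_ne_zero.mpr hdne)
          (Polynomial.leadingCoeff_ne_zero.mpr hwne)) hcoef.symm
    · rintro ⟨n, hd⟩
      exact ⟨_, WAux2.psi_hom lam h1 h2 n hd, WAux2.psi_ne n⟩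
  · intro n hd
    refine ⟨WAux2.psi_hom lam h1 h2 n hd, WAux2.psi_ne n, ?_⟩
    intro φ hφ
    obtain ⟨w, hφw, hode⟩ := WAux2.hom_structure lam hlam h1 h2 φ hφ
    rw [hd] at hode
    have hcoef : ∀ j : ℕ, j ≠ n → w.coeff j = 0 := by
      intro j hj
      have h := congrArg (fun p => Polynomial.coeff p j) hode
      simp only [WAux.coeff_X_mul_derivative, Polynomial.coeff_C_mul] at h
      have hjn : (j : ℂ) ≠ (n : ℂ) := by exact_mod_cast hj
      have h0 : ((j : ℂ) - n) * w.coeff j = 0 := by linear_combination h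
      rcases mul_eq_zero.mp h0 with h' | h'
      · exact absurd (sub_eq_zero.mp h') hjn
      · exact h'
    have hwn : w = Polynomial.C (w.coeff n) * X ^ n := by
      ext j
      rw [Polynomial.coeff_C_mul, Polynomial.coeff_X_pow]
      by_cases hj : j = n
      · subst hj; simp
      · simp [hj, hcoef j hj]
    obtain ⟨c, hwc⟩ : ∃ c, w = Polynomial.C c * X ^ n := ⟨w.coeff n, hwn⟩
    refine ⟨c, ?_⟩
    apply LinearMap.ext
    intro x
    have hψ : TensorProduct.map LinearMap.id (LinearMap.mulLeft ℂ ((X : Polynomial ℂ) ^ n)) x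
        = (((1 : Polynomial ℂ) ⊗ₜ[ℂ] ((X : Polynomial ℂ) ^ n)) :
          TensorProduct ℂ (Polynomial ℂ) (Polynomial ℂ)) * x := by
      rw [WAux.map_mulLeft_right]
      rfl
    rw [LinearMap.smul_apply, hψ, hφw, hwc]
    have h1t : (((1 : Polynomial ℂ) ⊗ₜ[ℂ] (Polynomial.C c * X ^ n)) :
        TensorProduct ℂ (Polynomial ℂ) (Polynomial ℂ))
        = c • ((1 : Polynomial ℂ) ⊗ₜ[ℂ] ((X : Polynomial ℂ) ^ n)) := by
      rw [← Polynomial.smul_eq_C_mul, TensorProduct.tmul_smul]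
    rw [h1t, smul_mul_assoc]
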